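/- Let g be a 4×4 real symmetric matrix with det g < 0 and let L ∈ so(g) be simple with exp(L) = Λ. If tr₂ L < 0 then tr Λ = 2(1 + cosh√(−tr₂ L)) ≥ 4; if tr₂ L > 0 then tr Λ = 2(1 + cos√(tr₂ L)) ≥ 0; if tr₂ L = 0 then tr Λ = 4. In all cases tr₂ Λ = 2 tr Λ − 2 and tr Λ ≥ 0. -/

import Mathlib

open Matrix

/-- Second order trace of a 4×4 matrix. -/
noncomputable def tr2 (M : Matrix (Fin 4) (Fin 4) ℝ) : ℝ :=
  (Matrix.trace M ^ 2 - Matrix.trace (M * M)) / 2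

open scoped Nat
open NormedSpace Real

/-!
Since `g` is invertible, `L = -g⁻¹ Lᵀ g` is traceless, so `tr (L²) = -2c` with `c = tr₂ L`, and
`L³ = -c L` gives `L^(2k+1) = (-c)^k L` and `L^(2k+2) = (-c)^k L²`. The trace of the exponential
series therefore collapses to `2 + 2 ∑ (-c)^k / (2k)!`, which is `2 (1 + cos √c)` or
`2 (1 + cosh √(-c))` according to the sign of `c`. Finally `Λ² = exp (2L)`, where `2L` is again
traceless and simple with `tr₂ (2L) = 4c`, so the double-angle formulas give `tr (Λ²)` and hence
`tr₂ Λ`.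
-/

lemma hasSum_cos_sqrt_sub_one {b : ℝ} (hb : 0 ≤ b) :
    HasSum (fun k : ℕ => (-b) ^ (k + 1) / (2 * k + 2)!) (cos √b - 1) := by
  have h : HasSum (fun n : ℕ => (-b) ^ n / (2 * n)!) (cos √b) := by
    convert Real.hasSum_cos √b using 2 with n
    rw [pow_mul, sq_sqrt hb, neg_pow]
  simpa [mul_add_one] using (hasSum_nat_add_iff' 1).mpr h

lemma hasSum_cosh_sqrt_sub_one {b : ℝ} (hb : 0 ≤ b) :
    HasSum (fun k : ℕ => b ^ (k + 1) / (2 * k + 2)!) (cosh √b - 1) := by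
  have h : HasSum (fun n : ℕ => b ^ n / (2 * n)!) (cosh √b) := by
    convert Real.hasSum_cosh √b using 2 with n
    rw [pow_mul, sq_sqrt hb]
  simpa [mul_add_one] using (hasSum_nat_add_iff' 1).mpr h

section PowThree

variable {R A : Type*} [CommRing R] [Ring A] [Algebra R A] {x : A} {c : R}

lemma pow_two_mul_add_one_of_pow_three (h : x ^ 3 + c • x = 0) (k : ℕ) :
    x ^ (2 * k + 1) = (-c) ^ k • x := by
  induction k with
  | zero => simp
  | succ k ih =>
    rw [show 2 * (k + 1) + 1 = 2 * k + 1 + 2 by ring, pow_add, ih, smul_mul_assoc,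
      ← pow_succ', eq_neg_of_add_eq_zero_left h]
    module

lemma pow_two_mul_add_two_of_pow_three (h : x ^ 3 + c • x = 0) (k : ℕ) :
    x ^ (2 * k + 2) = (-c) ^ k • x ^ 2 := by
  rw [show 2 * k + 2 = 2 * k + 1 + 1 by ring, pow_succ, pow_two_mul_add_one_of_pow_three h,
    smul_mul_assoc, ← sq]

end PowThree

namespace Matrix

variable {n : Type*} [Fintype n] [DecidableEq n]

lemma trace_eq_zero_of_transpose_mul_add_mul_eq_zero {R : Type*} [CommRing R]
    [IsAddTorsionFree R] {g L : Matrix n n R} (hg : IsUnit g.det) (hL : Lᵀ * g + g * L = 0) :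
    trace L = 0 := by
  have hconj : L = -(g⁻¹ * Lᵀ * g) := by
    rw [mul_assoc, ← mul_neg, ← eq_neg_of_add_eq_zero_right hL, ← mul_assoc,
      nonsing_inv_mul g hg, one_mul]
  refine self_eq_neg.mp ?_
  conv_lhs => rw [hconj]
  rw [trace_neg, trace_mul_cycle, mul_nonsing_inv g hg, one_mul, trace_transpose]

lemma hasSum_trace_exp {𝕂 : Type*} [RCLike 𝕂] (M : Matrix n n 𝕂) :
    HasSum (fun k => trace (M ^ k) / k !) (trace (exp M)) := by
  open scoped Norms.Operator in
  have h := (exp_series_hasSum_exp' (𝕂 := 𝕂) M).mapL (traceLinearMap n 𝕂 𝕂).toContinuousLinearMap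
  simp only [LinearMap.coe_toContinuousLinearMap', traceLinearMap_apply, trace_smul,
    smul_eq_mul, ← div_eq_inv_mul] at h
  exact h

end Matrix

lemma tr2_smul (a : ℝ) (M : Matrix (Fin 4) (Fin 4) ℝ) : tr2 (a • M) = a ^ 2 * tr2 M := by
  simp only [tr2, trace_smul, smul_mul_smul_comm, smul_eq_mul]
  ring

section Simple

variable {M : Matrix (Fin 4) (Fin 4) ℝ}

lemma hasSum_trace_exp_sub_four (htr : trace M = 0) (hM : M ^ 3 + tr2 M • M = 0) :
    HasSum (fun k : ℕ => 2 * ((-tr2 M) ^ (k + 1) / (2 * k + 2)!)) (trace (exp M) - 4) := by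
  have hshift : HasSum (fun k : ℕ => trace (M ^ (k + 1)) / (k + 1)!) (trace (exp M) - 4) := by
    simpa [trace_one] using (hasSum_nat_add_iff' 1).mpr (hasSum_trace_exp M)
  have hodd : ∀ k ∉ Set.range (fun k : ℕ => 2 * k + 1), trace (M ^ (k + 1)) / (k + 1)! = 0 := by
    intro k hk
    obtain ⟨m, rfl⟩ : Even k := Nat.not_odd_iff_even.mp fun ⟨m, hm⟩ => hk ⟨m, hm.symm⟩
    rw [← two_mul, pow_two_mul_add_one_of_pow_three hM, trace_smul, htr, smul_zero, zero_div]
  have htrsq : trace (M ^ 2) = -2 * tr2 M := by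
    rw [tr2, htr, sq M]
    ring
  have hinj : Function.Injective fun k : ℕ => 2 * k + 1 := fun a b h => by simpa using h
  refine ((hinj.hasSum_iff hodd).mpr hshift).congr_fun fun k => ?_
  simp only [Function.comp_apply, show 2 * k + 1 + 1 = 2 * k + 2 by ring,
    pow_two_mul_add_two_of_pow_three hM, trace_smul, htrsq, smul_eq_mul]
  ring

lemma trace_exp_of_tr2_nonneg (htr : trace M = 0) (hM : M ^ 3 + tr2 M • M = 0)
    (hc : 0 ≤ tr2 M) : trace (exp M) = 2 * (1 + cos √(tr2 M)) := by
  have := (hasSum_trace_exp_sub_four htr hM).unique ((hasSum_cos_sqrt_sub_one hc).mul_left 2)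
  linarith

lemma trace_exp_of_tr2_nonpos (htr : trace M = 0) (hM : M ^ 3 + tr2 M • M = 0)
    (hc : tr2 M ≤ 0) : trace (exp M) = 2 * (1 + cosh √(-tr2 M)) := by
  have := (hasSum_trace_exp_sub_four htr hM).unique
    ((hasSum_cosh_sqrt_sub_one (neg_nonneg.mpr hc)).mul_left 2)
  linarith

lemma trace_exp_nonneg (htr : trace M = 0) (hM : M ^ 3 + tr2 M • M = 0) :
    0 ≤ trace (exp M) := by
  rcases le_total 0 (tr2 M) with hc | hc
  · rw [trace_exp_of_tr2_nonneg htr hM hc]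
    linarith [neg_one_le_cos √(tr2 M)]
  · rw [trace_exp_of_tr2_nonpos htr hM hc]
    linarith [one_le_cosh √(-tr2 M)]

lemma tr2_exp (htr : trace M = 0) (hM : M ^ 3 + tr2 M • M = 0) :
    tr2 (exp M) = 2 * trace (exp M) - 2 := by
  have hsq : exp M * exp M = exp ((2 : ℝ) • M) := by
    rw [← Matrix.exp_add_of_commute M M (Commute.refl M), two_smul]
  have htr₂ : trace ((2 : ℝ) • M) = 0 := by rw [trace_smul, htr, smul_zero]
  have hM₂ : ((2 : ℝ) • M) ^ 3 + tr2 ((2 : ℝ) • M) • (2 : ℝ) • M = 0 := by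
    calc _ = (8 : ℝ) • (M ^ 3 + tr2 M • M) := by rw [tr2_smul, smul_pow]; module
      _ = 0 := by rw [hM, smul_zero]
  have hsqrt (b : ℝ) : √(2 ^ 2 * b) = 2 * √b := by
    rw [Real.sqrt_mul (by positivity), Real.sqrt_sq zero_le_two]
  rw [tr2, hsq]
  rcases le_total 0 (tr2 M) with hc | hc
  · rw [trace_exp_of_tr2_nonneg htr hM hc,
      trace_exp_of_tr2_nonneg htr₂ hM₂ (by rw [tr2_smul]; positivity), tr2_smul, hsqrt,
      cos_two_mul]
    ring
  · rw [trace_exp_of_tr2_nonpos htr hM hc,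
      trace_exp_of_tr2_nonpos htr₂ hM₂ (by rw [tr2_smul]; nlinarith), tr2_smul, ← mul_neg, hsqrt,
      cosh_two_mul, sinh_sq]
    ring

end Simple

theorem trace_of_exp_simple_general (g L Λ : Matrix (Fin 4) (Fin 4) ℝ)
    (hg : g.det < 0) (hL : Lᵀ * g + g * L = 0)
    (hsimple : L ^ 3 + tr2 L • L = 0)
    (hΛ : Λ = NormedSpace.exp L) :
    (tr2 L < 0 →
      Matrix.trace Λ = 2 * (1 + Real.cosh (Real.sqrt (-(tr2 L)))) ∧ 4 ≤ Matrix.trace Λ) ∧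
    (0 < tr2 L →
      Matrix.trace Λ = 2 * (1 + Real.cos (Real.sqrt (tr2 L))) ∧ 0 ≤ Matrix.trace Λ) ∧
    (tr2 L = 0 → Matrix.trace Λ = 4) ∧
    tr2 Λ = 2 * Matrix.trace Λ - 2 ∧ 0 ≤ Matrix.trace Λ := by
  have htr : trace L = 0 :=
    trace_eq_zero_of_transpose_mul_add_mul_eq_zero (isUnit_iff_ne_zero.mpr hg.ne) hL
  subst hΛ
  refine ⟨fun hc => ⟨trace_exp_of_tr2_nonpos htr hsimple hc.le, ?_⟩,
    fun hc => ⟨trace_exp_of_tr2_nonneg htr hsimple hc.le, trace_exp_nonneg htr hsimple⟩,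
    fun hc => ?_, tr2_exp htr hsimple, trace_exp_nonneg htr hsimple⟩
  · rw [trace_exp_of_tr2_nonpos htr hsimple hc.le]
    linarith [one_le_cosh √(-tr2 L)]
  · rw [trace_exp_of_tr2_nonneg htr hsimple hc.ge, hc, Real.sqrt_zero, cos_zero]
    norm_num

theorem trace_of_exp_simple (g L Λ : Matrix (Fin 4) (Fin 4) ℝ)
    (hsymm : gᵀ = g) (hg : g.det < 0) (hL : Lᵀ * g + g * L = 0)
    (hsimple : L ^ 3 + tr2 L • L = 0)
    (hΛ : Λ = NormedSpace.exp L) :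
    (tr2 L < 0 →
      Matrix.trace Λ = 2 * (1 + Real.cosh (Real.sqrt (-(tr2 L)))) ∧ 4 ≤ Matrix.trace Λ) ∧
    (0 < tr2 L →
      Matrix.trace Λ = 2 * (1 + Real.cos (Real.sqrt (tr2 L))) ∧ 0 ≤ Matrix.trace Λ) ∧
    (tr2 L = 0 → Matrix.trace Λ = 4) ∧
    tr2 Λ = 2 * Matrix.trace Λ - 2 ∧ 0 ≤ Matrix.trace Λ :=
  trace_of_exp_simple_general g L Λ hg hL hsimple hΛ
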